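/- The map t : B⋊·H → H defined by t(b⊗h) = d(b)h is a Hopf algebra map from the biproduct to H: t((a⊗h)(b⊗g)) = t(a⊗h)·t(b⊗g) for all a,b ∈ B and h,g ∈ H, t(1⊗1) = 1, Δ_H(t(x)) = (t⊗t)(Δ(x)) for all x ∈ B⋊·H, and ε(t(x)) = ε(x). (Proposition 3.5.) -/

import Mathlib

/-! Multiplicativity rests on the identity `d(h₁▷b) h₂ = h₁ d(b) S(h₂) h₃ = h d(b)`, obtained from
`d(h▷b) = h₁ d(b) S(h₂)`, coassociativity and the antipode axiom; it turns
`t((a⊗h)(b⊗g)) = d(a) d(h₁▷b) h₂ g` into `d(a) h d(b) g`. Comultiplicativity is the twisted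
Hopf-map condition for `d(b)` multiplied by `Δh`, as `Δ_H` is multiplicative, and counitality is
the same argument with `ε`. -/

open TensorProduct

noncomputable section

variable (k H B : Type*) [Field k] [Ring H] [HopfAlgebra k H]
  [Ring B] [Algebra k B] [Coalgebra k B]

/-- `t(b⊗h) = d(b)h`. -/
def tmap (d : B →ₗ[k] H) : B ⊗[k] H →ₗ[k] H :=
  LinearMap.mul' k H ∘ₗ map d LinearMap.id

/-- The smash product multiplication `(a⊗h)(b⊗g) = a(h₁▷b) ⊗ h₂g` on `B ⊗ H`. -/
def smashMul (act : H ⊗[k] B →ₗ[k] B) :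
    (B ⊗[k] H) ⊗[k] (B ⊗[k] H) →ₗ[k] B ⊗[k] H :=
  map (LinearMap.mul' k B) LinearMap.id
  ∘ₗ (TensorProduct.assoc k B B H).symm.toLinearMap
  ∘ₗ map LinearMap.id
      (map act (LinearMap.mul' k H)
        ∘ₗ (tensorTensorTensorComm k H H B H).toLinearMap)
  ∘ₗ (TensorProduct.assoc k B (H ⊗[k] H) (B ⊗[k] H)).toLinearMap
  ∘ₗ map (map LinearMap.id (Coalgebra.comul : H →ₗ[k] H ⊗[k] H)) LinearMap.id

/-- The smash (biproduct) coproduct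
`Δ(b⊗h) = (b₁ ⊗ (b₂)⁽¹⁾h₁) ⊗ ((b₂)⁽²⁾ ⊗ h₂)` on `B⋊·H`. -/
def comulBP (δ : B →ₗ[k] H ⊗[k] B) :
    B ⊗[k] H →ₗ[k] (B ⊗[k] H) ⊗[k] (B ⊗[k] H) :=
  map (map LinearMap.id (LinearMap.mul' k H) ∘ₗ (TensorProduct.assoc k B H H).toLinearMap)
      LinearMap.id
  ∘ₗ (tensorTensorTensorComm k (B ⊗[k] H) B H H).toLinearMap
  ∘ₗ map ((TensorProduct.assoc k B H B).symm.toLinearMap ∘ₗ map LinearMap.id δ)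
      (Coalgebra.comul : H →ₗ[k] H ⊗[k] H)
  ∘ₗ map (Coalgebra.comul : B →ₗ[k] B ⊗[k] B) LinearMap.id

/-- The biproduct counit `ε(b⊗h) = ε(b)ε(h)`. -/
def counitBP : B ⊗[k] H →ₗ[k] k :=
  (TensorProduct.lid k k).toLinearMap
    ∘ₗ map (Coalgebra.counit : B →ₗ[k] k) (Coalgebra.counit : H →ₗ[k] k)

end

namespace Coalgebra

lemma sum_counit_right_smul {R A ι : Type*} [CommSemiring R] [AddCommMonoid A] [Module R A]
    [Coalgebra R A] {a : A} (r : Repr R a ι) :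
    ∑ i ∈ r.index, counit (R := R) (r.right i) • r.left i = a := by
  have hr := congr(_root_.TensorProduct.rid R A $(sum_tmul_counit_eq r))
  simpa only [map_sum, _root_.TensorProduct.rid_tmul, one_smul] using hr

end Coalgebra

section

variable {k H B : Type*} [Field k] [Ring H] [HopfAlgebra k H] [Ring B] [Algebra k B]

open Coalgebra HopfAlgebra

@[simp]
lemma tmap_tmul (d : B →ₗ[k] H) (b : B) (h : H) : tmap k H B d (b ⊗ₜ h) = d b * h := rfl

lemma smashMul_tmul (act : H ⊗[k] B →ₗ[k] B) (a b : B) {h : H} (g : H) {ι : Type*}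
    (r : Repr k h ι) :
    smashMul k H B act ((a ⊗ₜ h) ⊗ₜ (b ⊗ₜ g))
      = ∑ i ∈ r.index, (a * act (r.left i ⊗ₜ b)) ⊗ₜ (r.right i * g) := by
  simp only [smashMul, LinearMap.comp_apply, LinearEquiv.coe_coe, map_tmul, LinearMap.id_coe,
    id_eq, ← r.eq, sum_tmul, tmul_sum, map_sum]
  simp [tensorTensorTensorComm_tmul]

section AdjointAction

variable (act : H ⊗[k] B →ₗ[k] B) (d : B →ₗ[k] H)
  (hd_act : d ∘ₗ act = LinearMap.mul' k H
      ∘ₗ map LinearMap.id (LinearMap.mul' k H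
            ∘ₗ map LinearMap.id (antipode k : H →ₗ[k] H)
            ∘ₗ (TensorProduct.comm k H H).toLinearMap)
      ∘ₗ (TensorProduct.assoc k H H H).toLinearMap
      ∘ₗ map (comul : H →ₗ[k] H ⊗[k] H) d)
include hd_act

lemma d_act_eq_sum (b : B) {h : H} {ι : Type*} (r : Repr k h ι) :
    d (act (h ⊗ₜ b)) = ∑ i ∈ r.index, r.left i * d b * antipode k (r.right i) := by
  simp [← LinearMap.comp_apply, hd_act, ← r.eq, sum_tmul, mul_assoc]

lemma sum_d_act_mul (b : B) {h : H} {ι : Type*} (r : Repr k h ι) :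
    ∑ i ∈ r.index, d (act (r.left i ⊗ₜ b)) * r.right i = h * d b := by
  let r₁ i := Repr.arbitrary k (r.left i)
  let r₂ i := Repr.arbitrary k (r.right i)
  let L : H ⊗[k] (H ⊗[k] H) →ₗ[k] H :=
    LinearMap.mul' k H ∘ₗ map (LinearMap.mulRight k (d b))
      (LinearMap.mul' k H ∘ₗ (antipode k).rTensor H)
  calc ∑ i ∈ r.index, d (act (r.left i ⊗ₜ b)) * r.right i
      = L (∑ i ∈ r.index, ∑ j ∈ (r₁ i).index,
          (r₁ i).left j ⊗ₜ ((r₁ i).right j ⊗ₜ r.right i)) := by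
        simp [L, d_act_eq_sum act d hd_act b (r₁ _), Finset.sum_mul, mul_assoc]
    _ = L (∑ i ∈ r.index, ∑ j ∈ (r₂ i).index,
          r.left i ⊗ₜ ((r₂ i).left j ⊗ₜ (r₂ i).right j)) := by
        rw [sum_tmul_tmul_eq r r₁ r₂]
    _ = ∑ i ∈ r.index, r.left i * d b *
          ∑ j ∈ (r₂ i).index, antipode k ((r₂ i).left j) * (r₂ i).right j := by
        simp [L, Finset.mul_sum]
    _ = (∑ i ∈ r.index, counit (R := k) (r.right i) • r.left i) * d b := by
        simp [sum_antipode_mul_eq_smul, Finset.sum_mul]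
    _ = h * d b := by rw [sum_counit_right_smul]

lemma tmap_smashMul_tmul (hd_mul : ∀ a b : B, d (a * b) = d a * d b) (a b : B) (h g : H) :
    tmap k H B d (smashMul k H B act ((a ⊗ₜ h) ⊗ₜ (b ⊗ₜ g)))
      = tmap k H B d (a ⊗ₜ h) * tmap k H B d (b ⊗ₜ g) := by
  let r := Repr.arbitrary k h
  calc tmap k H B d (smashMul k H B act ((a ⊗ₜ h) ⊗ₜ (b ⊗ₜ g)))
      = d a * (∑ i ∈ r.index, d (act (r.left i ⊗ₜ b)) * r.right i) * g := by
        simp [smashMul_tmul act a b g r, hd_mul, Finset.mul_sum, Finset.sum_mul, mul_assoc]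
    _ = tmap k H B d (a ⊗ₜ h) * tmap k H B d (b ⊗ₜ g) := by
        simp [sum_d_act_mul act d hd_act b r, mul_assoc]

end AdjointAction

end

section Comultiplicativity

variable {k H B : Type*} [Field k] [Ring H] [HopfAlgebra k H] [Ring B] [Algebra k B]
  [Coalgebra k B]

open Coalgebra

lemma map_tmap_comulBP_tmul (δ : B →ₗ[k] H ⊗[k] B) (d : B →ₗ[k] H) (b : B) (h : H) :
    map (tmap k H B d) (tmap k H B d) (comulBP k H B δ (b ⊗ₜ h))
      = (map (LinearMap.mul' k H) LinearMap.id
          ∘ₗ (TensorProduct.assoc k H H H).symm.toLinearMap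
          ∘ₗ map d (map LinearMap.id d ∘ₗ δ)
          ∘ₗ (comul : B →ₗ[k] B ⊗[k] B)) b * comul h := by
  simp only [comulBP, LinearMap.comp_apply, map_tmul, LinearMap.id_coe, id_eq,
    LinearEquiv.coe_coe]
  induction comul (R := k) b using TensorProduct.induction_on with
  | zero => simp
  | add X₁ X₂ h₁ h₂ => simp only [map_add, add_tmul, add_mul, h₁, h₂]
  | tmul x y =>
    induction comul (R := k) h using TensorProduct.induction_on with
    | zero => simp
    | add Y₁ Y₂ h₁ h₂ => simp only [map_add, tmul_add, mul_add, h₁, h₂]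
    | tmul u v =>
      simp only [map_tmul, LinearMap.comp_apply, LinearMap.id_coe, id_eq]
      induction δ y using TensorProduct.induction_on with
      | zero => simp
      | add W₁ W₂ h₁ h₂ => simp only [map_add, add_tmul, tmul_add, add_mul, h₁, h₂]
      | tmul p q =>
        simp [tensorTensorTensorComm_tmul, Algebra.TensorProduct.tmul_mul_tmul, mul_assoc]

lemma comul_comp_tmap (δ : B →ₗ[k] H ⊗[k] B) (d : B →ₗ[k] H)
    (hd_comul : (comul : H →ₗ[k] H ⊗[k] H) ∘ₗ d
      = map (LinearMap.mul' k H) LinearMap.id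
          ∘ₗ (TensorProduct.assoc k H H H).symm.toLinearMap
          ∘ₗ map d (map LinearMap.id d ∘ₗ δ)
          ∘ₗ (comul : B →ₗ[k] B ⊗[k] B)) :
    (comul : H →ₗ[k] H ⊗[k] H) ∘ₗ tmap k H B d
      = map (tmap k H B d) (tmap k H B d) ∘ₗ comulBP k H B δ := by
  refine TensorProduct.ext' fun b h ↦ ?_
  rw [LinearMap.comp_apply, LinearMap.comp_apply, tmap_tmul, Bialgebra.comul_mul,
    ← LinearMap.comp_apply comul d, hd_comul, map_tmap_comulBP_tmul]

lemma counit_comp_tmap (d : B →ₗ[k] H)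
    (hd_counit : (counit : H →ₗ[k] k) ∘ₗ d = (counit : B →ₗ[k] k)) :
    (counit : H →ₗ[k] k) ∘ₗ tmap k H B d = counitBP k H B := by
  ext b h
  simp [counitBP, Bialgebra.counit_mul, ← hd_counit]

end Comultiplicativity

noncomputable section

variable (k H B : Type*) [Field k] [Ring H] [HopfAlgebra k H]
  [Ring B] [Algebra k B] [Coalgebra k B]

theorem statement5 (act : H ⊗[k] B →ₗ[k] B) (δ : B →ₗ[k] H ⊗[k] B) (d : B →ₗ[k] H)
    -- `d` is an algebra map
    (hd_mul : ∀ a b : B, d (a * b) = d a * d b)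
    (hd_one : d 1 = 1)
    -- twisted Hopf-map condition: `Δ_H(d(b)) = d(b₁)(b₂)⁽¹⁾ ⊗ d((b₂)⁽²⁾)`
    (hd_comul : (Coalgebra.comul : H →ₗ[k] H ⊗[k] H) ∘ₗ d
      = map (LinearMap.mul' k H) LinearMap.id
          ∘ₗ (TensorProduct.assoc k H H H).symm.toLinearMap
          ∘ₗ map d (map LinearMap.id d ∘ₗ δ)
          ∘ₗ (Coalgebra.comul : B →ₗ[k] B ⊗[k] B))
    -- twisted Hopf-map condition: `ε(d(b)) = ε(b)`
    (hd_counit : (Coalgebra.counit : H →ₗ[k] k) ∘ₗ d = (Coalgebra.counit : B →ₗ[k] k))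
    -- `d(h▷b) = h₁ d(b) S(h₂)`
    (hd_act : d ∘ₗ act = LinearMap.mul' k H
      ∘ₗ map LinearMap.id (LinearMap.mul' k H
            ∘ₗ map LinearMap.id (HopfAlgebra.antipode (R := k) : H →ₗ[k] H)
            ∘ₗ (TensorProduct.comm k H H).toLinearMap)
      ∘ₗ (TensorProduct.assoc k H H H).toLinearMap
      ∘ₗ map (Coalgebra.comul : H →ₗ[k] H ⊗[k] H) d) :
    (∀ (a b : B) (h g : H),
      tmap k H B d (smashMul k H B act ((a ⊗ₜ[k] h) ⊗ₜ[k] (b ⊗ₜ[k] g)))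
        = tmap k H B d (a ⊗ₜ[k] h) * tmap k H B d (b ⊗ₜ[k] g))
    ∧ tmap k H B d ((1 : B) ⊗ₜ[k] (1 : H)) = 1
    ∧ (Coalgebra.comul : H →ₗ[k] H ⊗[k] H) ∘ₗ tmap k H B d
        = map (tmap k H B d) (tmap k H B d) ∘ₗ comulBP k H B δ
    ∧ (Coalgebra.counit : H →ₗ[k] k) ∘ₗ tmap k H B d = counitBP k H B :=
  ⟨tmap_smashMul_tmul act d hd_act hd_mul, by simp [hd_one], comul_comp_tmap δ d hd_comul,
    counit_comp_tmap d hd_counit⟩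

end
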